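/- In three variables, the identity (3 M_4 - M_2^2)(M_2^3 - 5 M_2 M_4 + 6 M_6) = 4(x^4 + y^4 + z^4 - x^2 y^2 - x^2 z^2 - y^2 z^2) · R(x,y,z) holds, where R is the Robinson form R(x,y,z) = x^6 + y^6 + z^6 - (x^4 y^2 + y^4 z^2 + z^4 x^2 + x^2 y^4 + y^2 z^4 + z^2 x^4) + 3 x^2 y^2 z^2. -/
import Mathlib


open MvPolynomial

noncomputable def M3 (r : ℕ) : MvPolynomial (Fin 3) ℝ := X 0 ^ r + X 1 ^ r + X 2 ^ r

/-- The Robinson form. -/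
noncomputable def Rob : MvPolynomial (Fin 3) ℝ :=
  X 0 ^ 6 + X 1 ^ 6 + X 2 ^ 6
    - (X 0 ^ 4 * X 1 ^ 2 + X 1 ^ 4 * X 2 ^ 2 + X 2 ^ 4 * X 0 ^ 2
      + X 0 ^ 2 * X 1 ^ 4 + X 1 ^ 2 * X 2 ^ 4 + X 2 ^ 2 * X 0 ^ 4)
    + 3 * (X 0 ^ 2 * X 1 ^ 2 * X 2 ^ 2)

theorem P3_eq_robinson_factor :
    (3 * M3 4 - (M3 2) ^ 2) * ((M3 2) ^ 3 - 5 * M3 2 * M3 4 + 6 * M3 6) =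
      4 * (X 0 ^ 4 + X 1 ^ 4 + X 2 ^ 4
          - X 0 ^ 2 * X 1 ^ 2 - X 0 ^ 2 * X 2 ^ 2 - X 1 ^ 2 * X 2 ^ 2) * Rob := by
  unfold M3 Rob; ring
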